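/- arXiv:1505.05114 — 3 statements merged into one kernel-verified Lean document; each statement's English description precedes it below -/
import Mathlib

section
/- Let x, z ∈ ℝⁿ with h := z - x satisfying ‖h‖ ≤ δ‖z‖ for some δ < 1/2. Then √(2-4δ)·‖h‖·‖z‖ ≤ ‖x xᵀ - z zᵀ‖_F ≤ (2+δ)·‖h‖·‖z‖. -/
/-!
Both sides are governed by the Gram identity
`‖x xᵀ - z zᵀ‖_F² = ‖x‖⁴ + ‖z‖⁴ - 2⟪x, z⟫²`. Writing `x = z - h` this becomes
`2‖h‖²‖z‖² + ‖h‖⁴ - 4‖h‖²⟪h, z⟫ + 2⟪h, z⟫²`, and Cauchy–Schwarz `|⟪h, z⟫| ≤ ‖h‖‖z‖` bounds it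
below by `2‖h‖²‖z‖² - 4‖h‖³‖z‖` and above by `(‖h‖(2‖z‖ + ‖h‖))²`; finally `‖h‖ ≤ δ‖z‖`.
-/

open RealInnerProductSpace

section

variable {E : Type*} [NormedAddCommGroup E] [InnerProductSpace ℝ E]

/-- The squared Hilbert–Schmidt norm of `x ⊗ x - z ⊗ z`. -/
def normSqOuterSub (x z : E) : ℝ := ‖x‖ ^ 4 + ‖z‖ ^ 4 - 2 * ⟪x, z⟫ ^ 2

theorem normSqOuterSub_eq (x z : E) :
    normSqOuterSub x z = 2 * ‖z - x‖ ^ 2 * ‖z‖ ^ 2 + ‖z - x‖ ^ 4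
      - 4 * ‖z - x‖ ^ 2 * ⟪z - x, z⟫ + 2 * ⟪z - x, z⟫ ^ 2 := by
  have hnorm : ‖z - x‖ ^ 2 = ‖z‖ ^ 2 - 2 * ⟪x, z⟫ + ‖x‖ ^ 2 := by
    rw [norm_sub_sq_real, real_inner_comm]
  have hinner : ⟪z - x, z⟫ = ‖z‖ ^ 2 - ⟪x, z⟫ := by
    rw [inner_sub_left, real_inner_self_eq_norm_sq]
  rw [normSqOuterSub, show ‖z - x‖ ^ 4 = (‖z - x‖ ^ 2) ^ 2 by ring, hnorm, hinner]
  ring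

theorem two_mul_sq_sub_le_normSqOuterSub (x z : E) :
    2 * (‖z - x‖ * ‖z‖) ^ 2 - 4 * ‖z - x‖ ^ 3 * ‖z‖ ≤ normSqOuterSub x z := by
  have hlin : ⟪z - x, z⟫ * ‖z - x‖ ^ 2 ≤ ‖z - x‖ * ‖z‖ * ‖z - x‖ ^ 2 :=
    mul_le_mul_of_nonneg_right (real_inner_le_norm _ _) (sq_nonneg _)
  rw [normSqOuterSub_eq]
  nlinarith [pow_nonneg (norm_nonneg (z - x)) 4, sq_nonneg ⟪z - x, z⟫]

theorem normSqOuterSub_le (x z : E) :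
    normSqOuterSub x z ≤ (‖z - x‖ * (2 * ‖z‖ + ‖z - x‖)) ^ 2 := by
  have hcs := abs_real_inner_le_norm (z - x) z
  have hsq : ⟪z - x, z⟫ ^ 2 ≤ (‖z - x‖ * ‖z‖) ^ 2 :=
    sq_le_sq' (abs_le.mp hcs).1 (abs_le.mp hcs).2
  have hlin : -⟪z - x, z⟫ * ‖z - x‖ ^ 2 ≤ ‖z - x‖ * ‖z‖ * ‖z - x‖ ^ 2 :=
    mul_le_mul_of_nonneg_right ((neg_le_abs _).trans hcs) (sq_nonneg _)
  rw [normSqOuterSub_eq]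
  nlinarith

end

theorem EuclideanSpace.sum_sum_mul_sub_mul_sq {ι : Type*} [Fintype ι]
    (x z : EuclideanSpace ℝ ι) :
    ∑ i, ∑ j, (x i * x j - z i * z j) ^ 2 = normSqOuterSub x z := by
  have hnorm (y : EuclideanSpace ℝ ι) : ‖y‖ ^ 4 = ∑ i, ∑ j, y i ^ 2 * y j ^ 2 := by
    rw [show ‖y‖ ^ 4 = (‖y‖ ^ 2) ^ 2 by ring, EuclideanSpace.real_norm_sq_eq, sq,
      Fintype.sum_mul_sum]
  have hinner : ⟪x, z⟫ ^ 2 = ∑ i, ∑ j, (x i * z i) * (x j * z j) := by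
    rw [sq, ← Fintype.sum_mul_sum]
    simp [PiLp.inner_apply, mul_comm]
  rw [normSqOuterSub, hnorm, hnorm, hinner, Finset.mul_sum, ← Finset.sum_add_distrib,
    ← Finset.sum_sub_distrib]
  refine Finset.sum_congr rfl fun i _ => ?_
  rw [Finset.mul_sum, ← Finset.sum_add_distrib, ← Finset.sum_sub_distrib]
  exact Finset.sum_congr rfl fun j _ => by ring

theorem stmt_0_general (n : ℕ) (x z : EuclideanSpace ℝ (Fin n)) (δ : ℝ)
    (hhz : ‖z - x‖ ≤ δ * ‖z‖) :
    Real.sqrt (2 - 4 * δ) * ‖z - x‖ * ‖z‖ ≤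
      Real.sqrt (∑ i, ∑ j, (x i * x j - z i * z j) ^ 2) ∧
    Real.sqrt (∑ i, ∑ j, (x i * x j - z i * z j) ^ 2) ≤ (2 + δ) * ‖z - x‖ * ‖z‖ := by
  rw [EuclideanSpace.sum_sum_mul_sub_mul_sq]
  have hcube : ‖z - x‖ ^ 3 * ‖z‖ ≤ δ * (‖z - x‖ * ‖z‖) ^ 2 := by
    linear_combination mul_le_mul_of_nonneg_left hhz (by positivity : 0 ≤ ‖z - x‖ ^ 2 * ‖z‖)
  constructor
  · calc Real.sqrt (2 - 4 * δ) * ‖z - x‖ * ‖z‖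
        = Real.sqrt ((2 - 4 * δ) * (‖z - x‖ * ‖z‖) ^ 2) := by
          rw [Real.sqrt_mul' _ (sq_nonneg _), Real.sqrt_sq (by positivity), mul_assoc]
      _ ≤ Real.sqrt (normSqOuterSub x z) := by
          gcongr
          linarith [two_mul_sq_sub_le_normSqOuterSub x z]
  · calc Real.sqrt (normSqOuterSub x z)
        ≤ Real.sqrt ((‖z - x‖ * (2 * ‖z‖ + ‖z - x‖)) ^ 2) :=
          Real.sqrt_le_sqrt (normSqOuterSub_le x z)
      _ = ‖z - x‖ * (2 * ‖z‖ + ‖z - x‖) := Real.sqrt_sq (by positivity)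
      _ ≤ (2 + δ) * ‖z - x‖ * ‖z‖ := by nlinarith [norm_nonneg (z - x)]

/-- Frobenius-norm bounds on `x xᵀ - z zᵀ` in terms of `‖h‖‖z‖` where `h = z - x`. -/
theorem stmt_0 (n : ℕ) (x z : EuclideanSpace ℝ (Fin n)) (δ : ℝ) (hδ : δ < 1/2)
    (hhz : ‖z - x‖ ≤ δ * ‖z‖) :
    Real.sqrt (2 - 4 * δ) * ‖z - x‖ * ‖z‖ ≤
      Real.sqrt (∑ i, ∑ j, (x i * x j - z i * z j) ^ 2) ∧
    Real.sqrt (∑ i, ∑ j, (x i * x j - z i * z j) ^ 2) ≤ (2 + δ) * ‖z - x‖ * ‖z‖ :=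
  stmt_0_general n x z δ hhz
end

section
/- For every t ∈ [0,1], the function f(t) := (2/π)·(2√t + (1-t)·(π/2 - 2·arctan(√t))) satisfies f(t)/√(1+t²) ≥ 0.9. -/
/-! With `√t = tan θ` and `φ = π/2 - 2θ ∈ [0, π/2]` one has
`2√t + (1 - t)(π/2 - 2 arctan √t) = (1 + t)(cos φ + φ sin φ)` and `2(1 + t²) = (1 + t)²(1 + sin² φ)`.
The inequality `(cos φ + φ sin φ)² ≥ 1 + sin² φ` holds on `[0, π/2]` because the difference is
`2 sin φ · (φ cos φ + φ²/2 sin φ - sin φ)`, whose second factor vanishes at `0` and has derivative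
`φ²/2 cos φ ≥ 0`. Hence `f(t) ≥ (2√2/π) √(1 + t²)`, with equality at `t = 1`, and `2√2/π ≈ 0.9003`. -/

open Real

lemma sin_le_mul_cos_add_sq_div_two_mul_sin {φ : ℝ} (h0 : 0 ≤ φ) (h1 : φ ≤ π / 2) :
    sin φ ≤ φ * cos φ + φ ^ 2 / 2 * sin φ := by
  let g : ℝ → ℝ := fun x ↦ x * cos x + x ^ 2 / 2 * sin x - sin x
  have hg : ∀ x, HasDerivAt g (x ^ 2 / 2 * cos x) x := fun x ↦
    ((((hasDerivAt_id x).mul (hasDerivAt_cos x)).add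
      (((hasDerivAt_pow 2 x).div_const 2).mul (hasDerivAt_sin x))).sub
        (hasDerivAt_sin x)).congr_deriv (by simp)
  have hmono : MonotoneOn g (Set.Icc 0 (π / 2)) := by
    refine monotoneOn_of_hasDerivWithinAt_nonneg (convex_Icc _ _)
      (fun x _ ↦ (hg x).continuousAt.continuousWithinAt) (fun x _ ↦ (hg x).hasDerivWithinAt)
      fun x hx ↦ ?_
    rw [interior_Icc] at hx
    exact mul_nonneg (by positivity) (cos_nonneg_of_mem_Icc ⟨by linarith [pi_pos, hx.1], hx.2.le⟩)
  have := hmono ⟨le_rfl, by positivity⟩ ⟨h0, h1⟩ h0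
  simp only [g, sin_zero, mul_zero, zero_mul, add_zero, sub_zero] at this
  linarith

lemma one_add_sin_sq_le_sq_cos_add_mul_sin {φ : ℝ} (h0 : 0 ≤ φ) (h1 : φ ≤ π / 2) :
    1 + sin φ ^ 2 ≤ (cos φ + φ * sin φ) ^ 2 := by
  have hsin : 0 ≤ sin φ := sin_nonneg_of_nonneg_of_le_pi h0 (by linarith [pi_pos])
  nlinarith [mul_nonneg hsin (sub_nonneg.2 (sin_le_mul_cos_add_sq_div_two_mul_sin h0 h1)),
    sin_sq_add_cos_sq φ]

lemma sin_two_mul_arctan (x : ℝ) : sin (2 * arctan x) = 2 * x / (1 + x ^ 2) := by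
  rw [sin_two_mul, sin_arctan, cos_arctan, mul_assoc, div_mul_div_comm, mul_one, ← sq,
    sq_sqrt (by positivity), mul_div_assoc]

lemma cos_two_mul_arctan (x : ℝ) : cos (2 * arctan x) = (1 - x ^ 2) / (1 + x ^ 2) := by
  have : 1 + x ^ 2 ≠ 0 := by positivity
  rw [cos_two_mul, cos_sq_arctan]
  field_simp
  ring

lemma sqrt_two_mul_sqrt_one_add_pow_four_le {s : ℝ} (hs0 : 0 ≤ s) (hs1 : s ≤ 1) :
    √2 * √(1 + s ^ 4) ≤ 2 * s + (1 - s ^ 2) * (π / 2 - 2 * arctan s) := by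
  set φ := π / 2 - 2 * arctan s with hφ
  have hφ0 : 0 ≤ φ := by
    have := arctan_strictMono.monotone hs1
    rw [arctan_one] at this
    linarith
  have hφ1 : φ ≤ π / 2 := by linarith [arctan_nonneg.2 hs0]
  have hcos : cos φ = 2 * s / (1 + s ^ 2) := by rw [cos_pi_div_two_sub, sin_two_mul_arctan]
  have hsin : sin φ = (1 - s ^ 2) / (1 + s ^ 2) := by rw [sin_pi_div_two_sub, cos_two_mul_arctan]
  have hrhs : 2 * s + (1 - s ^ 2) * φ = (1 + s ^ 2) * (cos φ + φ * sin φ) := by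
    rw [hcos, hsin]; field_simp
  have hlhs : 2 * (1 + s ^ 4) = (1 + s ^ 2) ^ 2 * (1 + sin φ ^ 2) := by
    rw [hsin]; field_simp; ring
  have hnonneg : 0 ≤ 2 * s + (1 - s ^ 2) * φ :=
    add_nonneg (by positivity) (mul_nonneg (by nlinarith) hφ0)
  rw [← sqrt_mul zero_le_two, sqrt_le_left hnonneg, hrhs, hlhs, mul_pow]
  gcongr
  exact one_add_sin_sq_le_sq_cos_add_mul_sin hφ0 hφ1

lemma nine_div_ten_le_two_mul_sqrt_two_div_pi : (0.9 : ℝ) ≤ 2 * √2 / π := by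
  rw [le_div_iff₀ pi_pos]
  nlinarith [pi_lt_d4, pi_pos, sq_sqrt (zero_le_two : (0 : ℝ) ≤ 2), sqrt_nonneg 2]

/-- For `t ∈ [0,1]`, `f(t) = (2/π)(2√t + (1-t)(π/2 - 2 arctan √t))` satisfies
`f(t)/√(1+t²) ≥ 0.9`. -/
theorem stmt_1 (t : ℝ) (ht : t ∈ Set.Icc (0 : ℝ) 1) :
    (2 / Real.pi) * (2 * Real.sqrt t + (1 - t) * (Real.pi / 2 - 2 * Real.arctan (Real.sqrt t)))
      ≥ 0.9 * Real.sqrt (1 + t ^ 2) := by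
  obtain ⟨ht0, ht1⟩ := ht
  have key := sqrt_two_mul_sqrt_one_add_pow_four_le (sqrt_nonneg t) (sqrt_le_one.2 ht1)
  rw [show √t ^ 4 = t ^ 2 by rw [show 4 = 2 * 2 by rfl, pow_mul, sq_sqrt ht0], sq_sqrt ht0] at key
  calc 0.9 * √(1 + t ^ 2) ≤ 2 * √2 / π * √(1 + t ^ 2) := 
        mul_le_mul_of_nonneg_right nine_div_ten_le_two_mul_sqrt_two_div_pi (sqrt_nonneg _)
    _ = 2 / π * (√2 * √(1 + t ^ 2)) := by ring
    _ ≤ 2 / π * (2 * √t + (1 - t) * (π / 2 - 2 * arctan √t)) := by gcongr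
end

section
/- Let z, x ∈ ℝⁿ, h = z - x, and suppose a ∈ ℝⁿ satisfies: |aᵀz| ≥ α·‖z‖ for some α > 0, and |(aᵀx)² - (aᵀz)²| ≤ γ·‖h‖·|aᵀz| with γ·‖h‖ ≤ α·‖z‖. Then either |aᵀh| ≤ γ‖h‖, or |aᵀh - 2aᵀz| ≤ γ‖h‖. -/
/-!
Writing `u = aᵀh` and `v = aᵀz`, we have `aᵀx = v - u` and `(aᵀx)² - (aᵀz)² = u (u - 2v)`.
The two factors `|u|` and `|u - 2v|` sum to at least `2|v|`, so if both exceeded `g = γ‖h‖`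
their product would exceed `g (|u| + |u - 2v|) - g² ≥ 2g|v| - g² ≥ g|v|`, using `g ≤ |v|`.
-/

lemma le_or_le_of_mul_le_of_two_mul_le_add {R : Type*} [CommRing R] [LinearOrder R]
    [IsStrictOrderedRing R] {a b c g : R} (hg : 0 ≤ g) (hgc : g ≤ c) (hsum : 2 * c ≤ a + b)
    (hab : a * b ≤ g * c) : a ≤ g ∨ b ≤ g := by
  by_contra! h
  nlinarith [mul_pos (sub_pos.2 h.1) (sub_pos.2 h.2), mul_le_mul_of_nonneg_left hsum hg,
    mul_nonneg hg (sub_nonneg.2 hgc)]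

lemma abs_le_or_abs_sub_two_mul_le_of_abs_sq_sub_sq_le {R : Type*} [CommRing R] [LinearOrder R]
    [IsStrictOrderedRing R] {u v g : R} (hg : 0 ≤ g) (hgv : g ≤ |v|)
    (hquad : |(v - u) ^ 2 - v ^ 2| ≤ g * |v|) : |u| ≤ g ∨ |u - 2 * v| ≤ g := by
  have hfactor : (v - u) ^ 2 - v ^ 2 = u * (u - 2 * v) := by ring
  have hsum : 2 * |v| ≤ |u| + |u - 2 * v| := by
    calc 2 * |v| = |u - (u - 2 * v)| := by rw [sub_sub_cancel, abs_mul, abs_two]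
      _ ≤ |u| + |u - 2 * v| := abs_sub _ _
  rw [hfactor, abs_mul] at hquad
  exact le_or_le_of_mul_le_of_two_mul_le_add hg hgv hsum hquad

theorem stmt_18_general (n : ℕ) (z x h a : EuclideanSpace ℝ (Fin n)) (α γ : ℝ)
    (hγ : 0 < γ) (hh : h = z - x)
    (haz : α * ‖z‖ ≤ |(inner ℝ a z : ℝ)|)
    (hquad : |(inner ℝ a x : ℝ) ^ 2 - (inner ℝ a z : ℝ) ^ 2| ≤ γ * ‖h‖ * |(inner ℝ a z : ℝ)|)
    (hsmall : γ * ‖h‖ ≤ α * ‖z‖) :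
    |(inner ℝ a h : ℝ)| ≤ γ * ‖h‖ ∨ |(inner ℝ a h : ℝ) - 2 * (inner ℝ a z : ℝ)| ≤ γ * ‖h‖ := by
  have hx : (inner ℝ a x : ℝ) = inner ℝ a z - inner ℝ a h := by
    rw [hh, inner_sub_right, sub_sub_cancel]
  rw [hx] at hquad
  exact abs_le_or_abs_sub_two_mul_le_of_abs_sq_sub_sq_le (by positivity) (hsmall.trans haz) hquad

/-- Decoupling of the quadratic truncation event: if `|aᵀz| ≥ α‖z‖`,
`|(aᵀx)² - (aᵀz)²| ≤ γ‖h‖|aᵀz|` and `γ‖h‖ ≤ α‖z‖`, then `aᵀh` lies within `γ‖h‖`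
of either `0` or `2aᵀz`, where `h = z - x`. -/
theorem stmt_18 (n : ℕ) (z x h a : EuclideanSpace ℝ (Fin n)) (α γ : ℝ)
    (hα : 0 < α) (hγ : 0 < γ) (hh : h = z - x)
    (haz : α * ‖z‖ ≤ |(inner ℝ a z : ℝ)|)
    (hquad : |(inner ℝ a x : ℝ) ^ 2 - (inner ℝ a z : ℝ) ^ 2| ≤ γ * ‖h‖ * |(inner ℝ a z : ℝ)|)
    (hsmall : γ * ‖h‖ ≤ α * ‖z‖) :
    |(inner ℝ a h : ℝ)| ≤ γ * ‖h‖ ∨ |(inner ℝ a h : ℝ) - 2 * (inner ℝ a z : ℝ)| ≤ γ * ‖h‖ :=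
  stmt_18_general n z x h a α γ hγ hh haz hquad hsmall
end
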